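/- Let N > 0, δ > 0, k ≥ 1 and α = (α_1, …, α_k) ∈ ℂ^k, and define for n ∈ ℕ and β ∈ ℂ: p_N(n|β) := (1/(N+1))·(N/(N+1))^n·exp(−|β|²/(N+1))·L_n(−|β|²/(N·(N+1))), where L_n(x) := Σ_{j=0}^n binom(n,j)·(−x)^j/j! is the n-th Laguerre polynomial. Then for every s > 0, the sum over all tuples (n_1, …, n_k) ∈ ℕ^k with n_1 + ⋯ + n_k ≤ k·(N+δ) of the product p_N(n_1|α_1)⋯p_N(n_k|α_k) is at most exp(s·k·(N+δ))·(N+1−N·e^{−s})^{−k}·exp(−‖α‖²·(1−e^{−s})/(N+1−N·e^{−s})), where ‖α‖² = Σ_{i=1}^k |α_i|². -/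

import Mathlib

/-!
Chernoff bound: on the event `∑ nᵢ ≤ K` the weight `∏ p_N(nᵢ|αᵢ)` is at most
`e^{s(K - ∑ nᵢ)} ∏ p_N(nᵢ|αᵢ)`, so the tail is at most `e^{sK}` times the joint generating
function at `z = e^{-s}`, which factorises over the modes. The single-mode generating function
follows from the Laguerre generating function `∑ tⁿ Lₙ(-y) = (1-t)⁻¹ e^{yt/(1-t)}`, with
`t = Nz/(N+1)` and `y = |β|²/(N(N+1))`; that identity comes from expanding `Lₙ` and
exchanging the two sums, all of whose terms are nonnegative.
-/

/-- The `n`-th Laguerre polynomial `L_n(x) = Σ_{j=0}^n binom(n,j)·(−x)^j/j!`. -/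
noncomputable def laguerre (n : ℕ) (x : ℝ) : ℝ :=
  ∑ j ∈ Finset.range (n + 1), (n.choose j : ℝ) * (-x) ^ j / (Nat.factorial j : ℝ)

/-- Photon-number distribution of a displaced thermal state with mean thermal photon
number `N` and displacement `β`. -/
noncomputable def pdisp (N : ℝ) (β : ℂ) (n : ℕ) : ℝ :=
  (1 / (N + 1)) * (N / (N + 1)) ^ n * Real.exp (-(‖β‖) ^ 2 / (N + 1)) *
    laguerre n (-(‖β‖) ^ 2 / (N * (N + 1)))

lemma laguerre_nonneg (n : ℕ) {x : ℝ} (hx : x ≤ 0) : 0 ≤ laguerre n x :=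
  Finset.sum_nonneg fun j _ => by have : 0 ≤ -x := neg_nonneg.mpr hx; positivity

lemma pdisp_nonneg {N : ℝ} (hN : 0 ≤ N) (β : ℂ) (n : ℕ) : 0 ≤ pdisp N β n := by
  have hL : 0 ≤ laguerre n (-(‖β‖) ^ 2 / (N * (N + 1))) :=
    laguerre_nonneg n <|
      div_nonpos_of_nonpos_of_nonneg (neg_nonpos.mpr (sq_nonneg _)) (by positivity)
  unfold pdisp
  positivity

lemma hasSum_choose_mul_pow {𝕜 : Type*} [NormedField 𝕜] [CompleteSpace 𝕜] {t : 𝕜}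
    (ht : ‖t‖ < 1) (j : ℕ) :
    HasSum (fun n : ℕ => (n.choose j : 𝕜) * t ^ n) (t ^ j / (1 - t) ^ (j + 1)) := by
  rw [← hasSum_nat_add_iff' j, Finset.sum_eq_zero fun i hi => by
    rw [Nat.choose_eq_zero_of_lt (Finset.mem_range.mp hi), Nat.cast_zero, zero_mul], sub_zero,
    div_eq_mul_one_div]
  have hshift : (fun n : ℕ => ((n + j).choose j : 𝕜) * t ^ (n + j)) =
      fun n => t ^ j * ((n + j).choose j * t ^ n) := by
    funext n; rw [pow_add]; ring
  exact hshift ▸ (hasSum_choose_mul_geometric_of_norm_lt_one j ht).mul_left (t ^ j)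

lemma hasSum_pow_mul_laguerre {t y : ℝ} (ht₀ : 0 ≤ t) (ht₁ : t < 1) (hy : 0 ≤ y) :
    HasSum (fun n => t ^ n * laguerre n (-y)) ((1 - t)⁻¹ * Real.exp (y * t / (1 - t))) := by
  have hnorm : ‖t‖ < 1 := by rwa [Real.norm_of_nonneg ht₀]
  set g : ℕ × ℕ → ℝ := fun p => y ^ p.1 / p.1.factorial * (p.2.choose p.1 * t ^ p.2)
  have hg : 0 ≤ g := fun p => by positivity
  have hrow (j : ℕ) :
      HasSum (fun n => g (j, n)) (y ^ j / j.factorial * (t ^ j / (1 - t) ^ (j + 1))) :=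
    (hasSum_choose_mul_pow hnorm j).mul_left _
  have hrows : HasSum (fun j : ℕ => y ^ j / j.factorial * (t ^ j / (1 - t) ^ (j + 1)))
      ((1 - t)⁻¹ * Real.exp (y * t / (1 - t))) := by
    have hexp := NormedSpace.expSeries_div_hasSum_exp (y * t / (1 - t))
    rw [← Real.exp_eq_exp_ℝ] at hexp
    have hterm : (fun j : ℕ => y ^ j / j.factorial * (t ^ j / (1 - t) ^ (j + 1))) =
        fun j => (1 - t)⁻¹ * ((y * t / (1 - t)) ^ j / j.factorial) := by
      have : 1 - t ≠ 0 := by linarith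
      funext j
      rw [div_pow, mul_pow, pow_succ]
      field_simp
    exact hterm ▸ hexp.mul_left _
  have hcol (n : ℕ) : HasSum (fun j => g (j, n)) (t ^ n * laguerre n (-y)) := by
    convert hasSum_sum_of_ne_finset_zero (L := SummationFilter.unconditional ℕ)
      (s := Finset.range (n + 1)) fun j hj => ?_ using 1
    · rw [laguerre, Finset.mul_sum]
      refine Finset.sum_congr rfl fun j _ => ?_
      simp only [g, neg_neg]
      ring
    · simp only [g, Nat.choose_eq_zero_of_lt (by simpa using hj : n < j)]
      simp
  have hsum : HasSum g ((1 - t)⁻¹ * Real.exp (y * t / (1 - t))) := by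
    have hg_summable : Summable g := (summable_prod_of_nonneg hg).mpr
      ⟨fun j => (hrow j).summable, hrows.summable.congr fun j => ((hrow j).tsum_eq).symm⟩
    rw [← (hg_summable.hasSum.prod_fiberwise hrow).unique hrows]
    exact hg_summable.hasSum
  exact ((Equiv.prodComm ℕ ℕ).hasSum_iff.mpr hsum).prod_fiberwise hcol

lemma hasSum_pdisp_mul_pow {N : ℝ} (hN : 0 < N) (β : ℂ) {z : ℝ} (hz₀ : 0 ≤ z)
    (hz₁ : z ≤ 1) :
    HasSum (fun n => pdisp N β n * z ^ n)
      ((N + 1 - N * z)⁻¹ * Real.exp (-‖β‖ ^ 2 * (1 - z) / (N + 1 - N * z))) := by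
  have hN₁ : 0 < N + 1 := by linarith
  have hD : 0 < N + 1 - N * z := by nlinarith
  set t := N * z / (N + 1)
  set y := ‖β‖ ^ 2 / (N * (N + 1))
  have ht₁ : t < 1 := by rw [div_lt_one hN₁]; nlinarith
  have h1t : 1 - t = (N + 1 - N * z) / (N + 1) := by simp only [t]; field_simp
  have hterm : (fun n => pdisp N β n * z ^ n) =
      fun n => (N + 1)⁻¹ * Real.exp (-‖β‖ ^ 2 / (N + 1)) * (t ^ n * laguerre n (-y)) := by
    funext n
    simp only [pdisp, t, y, neg_div, div_pow, mul_pow]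
    ring
  have hvalue :
      (N + 1)⁻¹ * Real.exp (-‖β‖ ^ 2 / (N + 1)) * ((1 - t)⁻¹ * Real.exp (y * t / (1 - t))) =
        (N + 1 - N * z)⁻¹ * Real.exp (-‖β‖ ^ 2 * (1 - z) / (N + 1 - N * z)) := by
    rw [mul_mul_mul_comm, ← Real.exp_add, h1t]
    congr 2
    · field_simp
    · simp only [t, y]
      field_simp
      ring
  rw [hterm, ← hvalue]
  exact (hasSum_pow_mul_laguerre (by positivity) ht₁ (by positivity)).mul_left _

theorem hasSum_fin_prod_of_nonneg {β : Type*} {k : ℕ} {f : Fin k → β → ℝ}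
    {a : Fin k → ℝ} (hf : ∀ i, 0 ≤ f i) (hfa : ∀ i, HasSum (f i) (a i)) :
    HasSum (fun n : Fin k → β => ∏ i, f i (n i)) (∏ i, a i) := by
  induction k with
  | zero => simp
  | succ k ih =>
    have htail := ih (fun i => hf i.succ) fun i => hfa i.succ
    have htail_nonneg : 0 ≤ fun n : Fin k → β => ∏ i : Fin k, f i.succ (n i) :=
      fun n => Finset.prod_nonneg fun i _ => hf i.succ (n i)
    have hsummable := (hfa 0).summable.mul_of_nonneg htail.summable (hf 0) htail_nonneg
    have hcons_sum := (hfa 0).mul htail hsummable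
    have hcons : (fun n : Fin (k + 1) → β => ∏ i, f i (n i)) ∘ Fin.consEquiv (fun _ => β) =
        fun q => f 0 q.1 * ∏ i : Fin k, f i.succ (q.2 i) := by
      funext q
      simp [Fin.consEquiv, Fin.prod_univ_succ]
    rw [Fin.prod_univ_succ, ← (Fin.consEquiv fun _ => β).hasSum_iff, hcons]
    exact hcons_sum

theorem hasSum_prod_pdisp_mul_exp_neg_sum {N : ℝ} (hN : 0 < N) {k : ℕ} (α : Fin k → ℂ)
    {s : ℝ} (hs : 0 ≤ s) :
    HasSum
      (fun n : Fin k → ℕ => (∏ i, pdisp N (α i) (n i)) * Real.exp (-s * ∑ i, (n i : ℝ)))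
      ((N + 1 - N * Real.exp (-s)) ^ (-(k : ℤ)) *
        Real.exp (-(∑ i, ‖α i‖ ^ 2) * (1 - Real.exp (-s)) /
          (N + 1 - N * Real.exp (-s)))) := by
  have hz₁ : Real.exp (-s) ≤ 1 := Real.exp_le_one_iff.mpr (neg_nonpos.mpr hs)
  have hprod := hasSum_fin_prod_of_nonneg
    (fun i n => mul_nonneg (pdisp_nonneg hN.le (α i) n) (pow_nonneg (Real.exp_pos _).le n))
    fun i => hasSum_pdisp_mul_pow hN (α i) (Real.exp_pos _).le hz₁
  convert hprod using 1
  · funext n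
    rw [Finset.prod_mul_distrib, Finset.prod_pow_eq_pow_sum, ← Real.exp_nat_mul, Nat.cast_sum]
    ring_nf
  · rw [Finset.prod_mul_distrib, Finset.prod_const, Finset.card_univ, Fintype.card_fin,
      ← Real.exp_sum, zpow_neg, zpow_natCast, inv_pow, ← Finset.sum_div, ← Finset.sum_mul,
      Finset.sum_neg_distrib]

theorem tsum_ite_le_le_exp_mul_of_hasSum {ι : Type*} {w X : ι → ℝ} {c s M : ℝ}
    (hw : 0 ≤ w) (hs : 0 ≤ s) (hM : HasSum (fun i => w i * Real.exp (-s * X i)) M) :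
    ∑' i, (if X i ≤ c then w i else 0) ≤ Real.exp (s * c) * M := by
  have hle (i : ι) :
      (if X i ≤ c then w i else 0) ≤ Real.exp (s * c) * (w i * Real.exp (-s * X i)) := by
    split_ifs with hXc
    · calc w i ≤ w i * Real.exp (s * (c - X i)) :=
            le_mul_of_one_le_right (hw i) (Real.one_le_exp (mul_nonneg hs (sub_nonneg.mpr hXc)))
        _ = Real.exp (s * c) * (w i * Real.exp (-s * X i)) := by
            rw [mul_left_comm, ← Real.exp_add]; ring_nf
    · exact mul_nonneg (Real.exp_pos _).le (mul_nonneg (hw i) (Real.exp_pos _).le)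
  have hbound := hM.mul_left (Real.exp (s * c))
  have hsummable : Summable fun i => if X i ≤ c then w i else 0 :=
    hbound.summable.of_nonneg_of_le (fun i => by split_ifs; exacts [hw i, le_rfl]) hle
  exact (hsummable.tsum_le_tsum hle hbound.summable).trans_eq hbound.tsum_eq

theorem displaced_thermal_lower_tail_general (N δ : ℝ) (hN : 0 < N)
    (k : ℕ) (α : Fin k → ℂ) (s : ℝ) (hs : 0 < s) :
    (∑' n : Fin k → ℕ,
      if (∑ i, (n i : ℝ)) ≤ (k : ℝ) * (N + δ)
      then ∏ i, pdisp N (α i) (n i)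
      else 0)
    ≤ Real.exp (s * k * (N + δ)) * (N + 1 - N * Real.exp (-s)) ^ (-(k : ℤ)) *
      Real.exp (-(∑ i, (‖α i‖) ^ 2) * (1 - Real.exp (-s)) /
        (N + 1 - N * Real.exp (-s))) := by
  rw [mul_assoc, mul_assoc s]
  exact tsum_ite_le_le_exp_mul_of_hasSum
    (fun n => Finset.prod_nonneg fun i _ => pdisp_nonneg hN.le _ _) hs.le
    (hasSum_prod_pdisp_mul_exp_neg_sum hN α hs.le)

/-- Chernoff/Markov bound for the lower tail of the total photon count of `k`
independent displaced thermal modes: for every `s > 0`, the probability that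
`n_1 + ⋯ + n_k ≤ k(N+δ)` is at most
`exp(s·k·(N+δ))·(N+1−N·e^{−s})^{−k}·exp(−‖α‖²(1−e^{−s})/(N+1−N·e^{−s}))`. -/
theorem displaced_thermal_lower_tail (N δ : ℝ) (hN : 0 < N) (hδ : 0 < δ)
    (k : ℕ) (hk : 1 ≤ k) (α : Fin k → ℂ) (s : ℝ) (hs : 0 < s) :
    (∑' n : Fin k → ℕ,
      if (∑ i, (n i : ℝ)) ≤ (k : ℝ) * (N + δ)
      then ∏ i, pdisp N (α i) (n i)
      else 0)
    ≤ Real.exp (s * k * (N + δ)) * (N + 1 - N * Real.exp (-s)) ^ (-(k : ℤ)) *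
      Real.exp (-(∑ i, (‖α i‖) ^ 2) * (1 - Real.exp (-s)) /
        (N + 1 - N * Real.exp (-s))) :=
  displaced_thermal_lower_tail_general N δ hN k α s hs
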